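/- If b is a zigzag path of length n, b′ is a zigzag path of length n′, and max_{t ∈ [0,1]} |b(t) − b′(t)| < 1/2, then n = n′. (Step (b) of the proof of Theorem 1.7.) -/
import Mathlib


open Set

/-- A continuous map `b : [0,1] → [0,1]` is a *zigzag path of length `n`* (see Context). -/
def IsZigzag (b : ℝ → ℝ) (n : ℕ) : Prop :=
  ContinuousOn b (Icc 0 1) ∧ (∀ t ∈ Icc (0:ℝ) 1, b t ∈ Icc (0:ℝ) 1) ∧
  ((n = 0 ∧ ∀ t ∈ Icc (0:ℝ) 1, b t = 0) ∨
   (1 ≤ n ∧ ∃ t : ℕ → ℝ, t 0 = 0 ∧ t n = 1 ∧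
     (∀ i < n, t i < t (i + 1)) ∧
     (∀ i ≤ n, b (t i) = if Odd i then 1 else 0) ∧
     (∀ i, 1 ≤ i → i ≤ n →
       if Odd i then MonotoneOn b (Icc (t (i - 1)) (t i))
       else AntitoneOn b (Icc (t (i - 1)) (t i)))))

lemma zigzag_le_of_dist_lt_half (b b' : ℝ → ℝ) (n n' : ℕ)
    (hb : IsZigzag b n) (hb' : IsZigzag b' n')
    (hd : ∀ t ∈ Icc (0:ℝ) 1, |b t - b' t| < 1 / 2) : n ≤ n' := by
  rcases hb with ⟨-, -, (⟨hn0, -⟩ | ⟨hn1, t, ht0, htn, htlt, htval, -⟩)⟩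
  · exact hn0 ▸ Nat.zero_le n'
  -- monotonicity of the break points of b
  have tmono : ∀ i j, i ≤ j → j ≤ n → t i ≤ t j := by
    intro i j hij
    induction hij with
    | refl => intro _; exact le_rfl
    | step h ih =>
        intro hjn
        exact le_trans (ih (by omega)) (le_of_lt (htlt _ (by omega)))
  have tmem : ∀ i, i ≤ n → t i ∈ Icc (0:ℝ) 1 := by
    intro i hi
    constructor
    · rw [← ht0]; exact tmono 0 i (Nat.zero_le i) hi
    · rw [← htn]; exact tmono i n hi le_rfl
  -- b' at the break points of b lies on alternating sides of 1/2
  have hsideOdd : ∀ i, i ≤ n → Odd i → 1 / 2 < b' (t i) := by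
    intro i hi ho
    have h1 := htval i hi
    rw [if_pos ho] at h1
    have h2 := hd (t i) (tmem i hi)
    rw [h1, abs_lt] at h2
    linarith [h2.1, h2.2]
  have hsideEven : ∀ i, i ≤ n → ¬ Odd i → b' (t i) < 1 / 2 := by
    intro i hi ho
    have h1 := htval i hi
    rw [if_neg ho] at h1
    have h2 := hd (t i) (tmem i hi)
    rw [h1, abs_lt] at h2
    linarith [h2.1, h2.2]
  rcases hb' with ⟨-, -, (⟨hn0', hzero'⟩ | ⟨hn1', t', ht0', htn', htlt', htval', htmono'⟩)⟩
  · -- n' = 0 : b' vanishes, but b (t 1) = 1, contradiction with distance < 1/2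
    exfalso
    have h1 := htval 1 hn1
    rw [if_pos (by decide : Odd 1)] at h1
    have h2 := hd (t 1) (tmem 1 hn1)
    rw [h1, hzero' (t 1) (tmem 1 hn1), abs_lt] at h2
    linarith [h2.2]
  · by_contra hcon
    push_neg at hcon  -- n' < n
    -- two consecutive break points of b can't lie in one monotone interval of b'
    have helper : ∀ j, 1 ≤ j → j ≤ n' → j + 1 ≤ n →
        t' (j - 1) ≤ t j → t (j + 1) ≤ t' j → False := by
      intro j hj1 hjn' hjn hx hy
      have hxy : t j ≤ t (j + 1) := tmono j (j + 1) (Nat.le_succ j) hjn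
      have hxmem : t j ∈ Icc (t' (j - 1)) (t' j) := ⟨hx, le_trans hxy hy⟩
      have hymem : t (j + 1) ∈ Icc (t' (j - 1)) (t' j) := ⟨le_trans hx hxy, hy⟩
      have hmon := htmono' j hj1 hjn'
      by_cases hodd : Odd j
      · rw [if_pos hodd] at hmon
        have h1 := hmon hxmem hymem hxy
        have h2 := hsideOdd j (by omega) hodd
        have h3 := hsideEven (j + 1) hjn (by simp [Nat.odd_add_one, hodd])
        linarith
      · rw [if_neg hodd] at hmon
        have h1 := hmon hxmem hymem hxy
        have h2 := hsideEven j (by omega) hodd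
        have h3 := hsideOdd (j + 1) hjn (Nat.odd_add_one.mpr hodd)
        linarith
    have claim : ∀ i, i < n' → t' i < t (i + 1) := by
      intro i
      induction i with
      | zero =>
          intro _
          rw [ht0', ← ht0]
          exact htlt 0 (by omega)
      | succ i ih =>
          intro hi
          have h1 := ih (by omega)
          by_contra hle
          push_neg at hle
          exact helper (i + 1) (by omega) (by omega) (by omega) h1.le hle
    have h1 := claim (n' - 1) (by omega)
    have hn'1 : n' - 1 + 1 = n' := by omega
    rw [hn'1] at h1
    have hy : t (n' + 1) ≤ t' n' := by
      rw [htn', ← htn]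
      exact tmono (n' + 1) n (by omega) le_rfl
    exact helper n' (by omega) le_rfl (by omega) h1.le hy

/-- Two zigzag paths at uniform distance `< 1/2` have the same length.
(Step (b) of the proof of Theorem 1.7.) -/
theorem zigzag_length_eq_of_dist_lt_half (b b' : ℝ → ℝ) (n n' : ℕ)
    (hb : IsZigzag b n) (hb' : IsZigzag b' n')
    (hd : ∀ t ∈ Icc (0:ℝ) 1, |b t - b' t| < 1 / 2) : n = n' := by
  refine le_antisymm (zigzag_le_of_dist_lt_half b b' n n' hb hb' hd) ?_
  refine zigzag_le_of_dist_lt_half b' b n' n hb' hb ?_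
  intro s hs
  rw [abs_sub_comm]
  exact hd s hs
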